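/- arXiv:1901.08564 — 2 statements merged into one kernel-verified Lean document; each statement's English description precedes it below -/
import Mathlib

section
/- Let P ⊆ R² be a polygon with bounding box R, sharing with R at least one bottommost, leftmost, topmost, and rightmost point. If ℓ is a vertical line and both P and R are folded by reflecting their portions right of ℓ to the left (taking the union with the left portions), then the bounding box of the folded P equals the folded R, provided the reflection of the rightmost point of P becomes the leftmost point of the folded P. -/
/-- Reflection of the plane across the vertical line `x = a`. -/
def reflV (a : ℝ) (p : ℝ × ℝ) : ℝ × ℝ := (2 * a - p.1, p.2)

/-- Folding a planar set across the vertical line `x = a`: the closed left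
part stays, the open right part is reflected onto the left. -/
def foldV (a : ℝ) (X : Set (ℝ × ℝ)) : Set (ℝ × ℝ) :=
  {p ∈ X | p.1 ≤ a} ∪ reflV a '' {p ∈ X | a < p.1}

/-- `B` is the bounding box of `X`: the smallest axis-aligned rectangle containing `X`. -/
def IsBoundingBox (X B : Set (ℝ × ℝ)) : Prop :=
  (∃ x0 x1 y0 y1 : ℝ, B = Set.Icc x0 x1 ×ˢ Set.Icc y0 y1) ∧ X ⊆ B ∧
    ∀ x0 x1 y0 y1 : ℝ, X ⊆ Set.Icc x0 x1 ×ˢ Set.Icc y0 y1 →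
      B ⊆ Set.Icc x0 x1 ×ˢ Set.Icc y0 y1

/-- Let `P` be a (connected) polygonal region whose bounding box is the
rectangle `R = [x0,x1] × [y0,y1]`, sharing with `R` a bottommost, leftmost,
topmost and rightmost point.  If both `P` and `R` are folded across a vertical
line `x = a` meeting `R`, and the reflection of the rightmost point of `P`
becomes the leftmost point of the folded `P`, then the bounding box of the
folded `P` equals the folded `R`. -/
theorem boundingBox_of_fold (P : Set (ℝ × ℝ)) (x0 x1 y0 y1 a : ℝ)
    (hconn : IsConnected P)
    (hsub : P ⊆ Set.Icc x0 x1 ×ˢ Set.Icc y0 y1)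
    (hx0 : ∃ p ∈ P, p.1 = x0) (hx1 : ∃ p ∈ P, p.1 = x1)
    (hy0 : ∃ p ∈ P, p.2 = y0) (hy1 : ∃ p ∈ P, p.2 = y1)
    (ha0 : x0 ≤ a) (ha1 : a ≤ x1)
    (hleft : ∀ q ∈ foldV a P, 2 * a - x1 ≤ q.1) :
    IsBoundingBox (foldV a P) (foldV a (Set.Icc x0 x1 ×ˢ Set.Icc y0 y1)) := by
  obtain ⟨p0, hp0P, hp0x⟩ := hx0
  obtain ⟨p1, hp1P, hp1x⟩ := hx1
  obtain ⟨q0, hq0P, hq0y⟩ := hy0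
  obtain ⟨q1, hq1P, hq1y⟩ := hy1
  have hy01 : y0 ≤ y1 := le_trans (hsub hp0P).2.1 (hsub hp0P).2.2
  have hp0fold : p0 ∈ foldV a P := Or.inl ⟨hp0P, by rw [hp0x]; exact ha0⟩
  have hkey : 2 * a - x1 ≤ x0 := hp0x ▸ hleft p0 hp0fold
  -- the fold of any point of P lies in `foldV a P`, with the same 2nd coordinate
  have hfold_mem : ∀ p ∈ P, ∃ q ∈ foldV a P, q.2 = p.2 := by
    intro p hp
    by_cases h : p.1 ≤ a
    · exact ⟨p, Or.inl ⟨hp, h⟩, rfl⟩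
    · exact ⟨reflV a p, Or.inr ⟨p, ⟨hp, lt_of_not_ge h⟩, rfl⟩, rfl⟩
  -- there is a point of P with first coordinate a (intermediate value)
  have haP : ∃ p ∈ P, p.1 = a := by
    have himg : IsPreconnected (Prod.fst '' P) :=
      (hconn.image _ continuous_fst.continuousOn).isPreconnected
    have : a ∈ Prod.fst '' P :=
      himg.Icc_subset ⟨p0, hp0P, hp0x⟩ ⟨p1, hp1P, hp1x⟩ ⟨ha0, ha1⟩
    obtain ⟨p, hp, hpa⟩ := this
    exact ⟨p, hp, hpa⟩
  -- description of the folded rectangle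
  have E : foldV a (Set.Icc x0 x1 ×ˢ Set.Icc y0 y1)
      = Set.Icc (2 * a - x1) (min a x1) ×ˢ Set.Icc y0 y1 := by
    ext ⟨x, y⟩
    simp only [foldV, reflV, Set.mem_union, Set.mem_image, Set.mem_setOf_eq,
      Set.mem_prod, Set.mem_Icc, Prod.mk.injEq, Prod.exists]
    constructor
    · rintro (⟨⟨⟨h1, h2⟩, h3, h4⟩, h5⟩ | ⟨u, v, ⟨⟨⟨h1, h2⟩, h3, h4⟩, h5⟩, h6, h7⟩)
      · exact ⟨⟨le_trans hkey h1, le_min h5 h2⟩, h3, h4⟩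
      · subst h6; subst h7
        constructor
        · constructor
          · linarith
          · exact le_min (by linarith) (by linarith)
        · exact ⟨h3, h4⟩
    · rintro ⟨⟨h1, h2⟩, h3, h4⟩
      rcases le_or_gt x0 x with h | h
      · exact Or.inl ⟨⟨⟨h, le_trans h2 (min_le_right _ _)⟩, h3, h4⟩,
          le_trans h2 (min_le_left _ _)⟩
      · refine Or.inr ⟨2 * a - x, y, ⟨⟨⟨by linarith, by linarith⟩, h3, h4⟩, ?_⟩,
          by ring, rfl⟩
        have hxa : x < a := lt_of_lt_of_le h ha0
        linarith
  refine ⟨⟨2 * a - x1, min a x1, y0, y1, E⟩, ?_, ?_⟩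
  · -- monotonicity of fold
    apply Set.union_subset_union
    · intro p hp; exact ⟨hsub hp.1, hp.2⟩
    · apply Set.image_mono
      intro p hp; exact ⟨hsub hp.1, hp.2⟩
  · intro u0 u1 v0 v1 hQ
    rw [E]
    -- witnesses inside foldV a P
    have hW : ∀ q ∈ foldV a P, (u0 ≤ q.1 ∧ q.1 ≤ u1) ∧ v0 ≤ q.2 ∧ q.2 ≤ v1 := by
      intro q hq
      have := hQ hq
      have h := this; simp only [Set.mem_prod, Set.mem_Icc] at h; exact ⟨h.1, h.2⟩
    -- left extreme: 2*a - x1 is attained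
    have hleft' : u0 ≤ 2 * a - x1 := by
      rcases lt_or_ge a x1 with h | h
      · have : reflV a p1 ∈ foldV a P :=
          Or.inr ⟨p1, ⟨hp1P, hp1x ▸ h⟩, rfl⟩
        have := (hW _ this).1.1
        simpa [reflV, hp1x] using this
      · -- a ≤ x1 together with x1 ≤ a : a = x1
        have hax : a = x1 := le_antisymm ha1 h
        have : p1 ∈ foldV a P := Or.inl ⟨hp1P, by rw [hp1x, hax]⟩
        have := (hW _ this).1.1
        rw [hp1x] at this
        linarith
    -- right extreme: min a x1 is attained
    have hright' : min a x1 ≤ u1 := by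
      rcases le_or_gt x1 a with h | h
      · have : p1 ∈ foldV a P := Or.inl ⟨hp1P, hp1x ▸ h⟩
        have := (hW _ this).1.2
        rw [hp1x] at this
        exact le_trans (min_le_right _ _) this
      · obtain ⟨p, hpP, hpa⟩ := haP
        have : p ∈ foldV a P := Or.inl ⟨hpP, le_of_eq hpa⟩
        have := (hW _ this).1.2
        rw [hpa] at this
        exact le_trans (min_le_left _ _) this
    -- bottom / top extremes
    obtain ⟨w0, hw0, hw0y⟩ := hfold_mem q0 hq0P
    obtain ⟨w1, hw1, hw1y⟩ := hfold_mem q1 hq1P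
    have hbot : v0 ≤ y0 := by have := (hW _ hw0).2.1; rw [hw0y, hq0y] at this; exact this
    have htop : y1 ≤ v1 := by have := (hW _ hw1).2.2; rw [hw1y, hq1y] at this; exact this
    exact Set.prod_mono (Set.Icc_subset_Icc hleft' hright') (Set.Icc_subset_Icc hbot htop)
end

section
/- If conditions (i) S[1] ≤ S[2k-1] and (ii) S[k-i] = comp(S[k+i]) for all i ∈ [1, k-2] hold for a prefix of length 2k+1 of the 1D string encoding S, then the all-layers simple fold at crease k is legal: no crease of the folded left part lands strictly inside a facet of the right part, and every pair of creases brought into coincidence has opposite assignments (hence merged consistently). -/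
/-- Complement of the value of the symbol at (1-indexed) string position `i`:
odd positions are distances (fixed), even positions are assignments (negated). -/
def compAt (i : ℕ) (v : ℝ) : ℝ := if i % 2 = 0 then -v else v

/-- Position on the paper of the `j`-th crease: the sum of the first `j`
distances (the symbols at odd string positions `1, 3, …, 2j-1`). -/
noncomputable def creasePos (S : ℕ → ℝ) (j : ℕ) : ℝ :=
  ∑ t ∈ Finset.Icc 1 j, S (2 * t - 1)

/-- `S` (1-indexed) encodes a 1D crease pattern with `n` creases: crease `j`
is the symbol at position `2j` with assignment in `{1,-1,0}`, and odd
positions hold the (positive) distances.  If the prefix conditions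
(i) `S[1] ≤ S[2k-1]` and (ii) `S[k-i] = comp (S[k+i])` for all `i ∈ [1, k-2]`
hold about the string position `k = 2c` of crease `c`, then the all-layers
simple fold at crease `c` is legal: every crease of the folded left part lands
exactly on a crease of the right part (never strictly inside a facet), and the
pair of creases brought into coincidence has opposite assignments (hence can
be merged consistently). -/
theorem legal_fold_of_prefix_conditions (S : ℕ → ℝ) (n c : ℕ)
    (hc1 : 1 ≤ c) (hc2 : 2 * c ≤ n + 1)
    (hassign : ∀ j, 1 ≤ j → j ≤ n → S (2 * j) = 1 ∨ S (2 * j) = -1 ∨ S (2 * j) = 0)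
    (hdist : ∀ j, 1 ≤ j → j ≤ n + 1 → 0 < S (2 * j - 1))
    (hi : S 1 ≤ S (2 * (2 * c) - 1))
    (hii : ∀ i, 1 ≤ i → i ≤ 2 * c - 2 →
      S (2 * c - i) = compAt (2 * c + i) (S (2 * c + i))) :
    ∀ j, 1 ≤ j → j < c →
      ∃ j', c < j' ∧ j' ≤ n ∧
        creasePos S j' = 2 * creasePos S c - creasePos S j ∧
        S (2 * j') = - S (2 * j) := by
  intro j hj1 hjc
  refine ⟨2 * c - j, by omega, by omega, ?_, ?_⟩
  · -- positions
    have key : ∀ t, c + 1 ≤ t → t ≤ 2 * c - j →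
        S (2 * (2 * c + 1 - t) - 1) = S (2 * t - 1) := by
      intro t ht1 ht2
      have h := hii (2 * t - 2 * c - 1) (by omega) (by omega)
      have e1 : 2 * c - (2 * t - 2 * c - 1) = 2 * (2 * c + 1 - t) - 1 := by omega
      have e2 : 2 * c + (2 * t - 2 * c - 1) = 2 * t - 1 := by omega
      rw [e1, e2] at h
      unfold compAt at h
      rw [if_neg (by omega)] at h
      exact h
    have hrefl : ∑ t ∈ Finset.Ioc c (2 * c - j), S (2 * t - 1)
        = ∑ t ∈ Finset.Ioc j c, S (2 * t - 1) := by
      refine Finset.sum_nbij' (i := fun t => 2 * c + 1 - t) (j := fun t => 2 * c + 1 - t)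
        ?_ ?_ ?_ ?_ ?_
      · intro a ha; simp only [Finset.mem_Ioc] at *; omega
      · intro a ha; simp only [Finset.mem_Ioc] at *; omega
      · intro a ha; simp only [Finset.mem_Ioc] at ha; omega
      · intro a ha; simp only [Finset.mem_Ioc] at ha; omega
      · intro a ha; simp only [Finset.mem_Ioc] at ha
        exact (key a ha.1 ha.2).symm
    unfold creasePos
    rw [show ∀ b : ℕ, Finset.Icc 1 b = Finset.Ioc 0 b from fun b => Finset.Icc_add_one_left_eq_Ioc 0 b, show ∀ b : ℕ, Finset.Icc 1 b = Finset.Ioc 0 b from fun b => Finset.Icc_add_one_left_eq_Ioc 0 b, show ∀ b : ℕ, Finset.Icc 1 b = Finset.Ioc 0 b from fun b => Finset.Icc_add_one_left_eq_Ioc 0 b]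
    have h1 : ∑ t ∈ Finset.Ioc 0 c, S (2 * t - 1)
        + ∑ t ∈ Finset.Ioc c (2 * c - j), S (2 * t - 1)
        = ∑ t ∈ Finset.Ioc 0 (2 * c - j), S (2 * t - 1) :=
      Finset.sum_Ioc_consecutive _ (by omega) (by omega)
    have h2 : ∑ t ∈ Finset.Ioc 0 j, S (2 * t - 1)
        + ∑ t ∈ Finset.Ioc j c, S (2 * t - 1)
        = ∑ t ∈ Finset.Ioc 0 c, S (2 * t - 1) :=
      Finset.sum_Ioc_consecutive _ (by omega) (by omega)
    linarith [hrefl]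
  · -- assignments
    have h := hii (2 * c - 2 * j) (by omega) (by omega)
    have e1 : 2 * c - (2 * c - 2 * j) = 2 * j := by omega
    have e2 : 2 * c + (2 * c - 2 * j) = 2 * (2 * c - j) := by omega
    rw [e1, e2] at h
    unfold compAt at h
    rw [if_pos (by omega)] at h
    linarith
end
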